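/- Fix x, y ∈ [−1,1] and for n ∈ ℤ set D_{n+1}(x,y) = I_{n+1}(x)·I_n(y) − I_n(x)·I_{n+1}(y). Then for every n ∈ ℤ, (n+2)·D_{n+1}(x,y) = (x−y)·(2n+1)·I_n(x)·I_n(y) + (n−1)·D_n(x,y). -/

import Mathlib

open Polynomial



/-- The Legendre polynomial of degree `n` on `[-1,1]`, via Rodrigues' formula. -/
noncomputable def legP (n : ℕ) (x : ℝ) : ℝ :=
  (1 / (2 ^ n * n.factorial)) * iteratedDeriv n (fun y : ℝ => (y ^ 2 - 1) ^ n) x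

/-- The complex-valued extension of the Legendre polynomials to integer degrees,
with `P_{-n-1}(x) = i * P_n(x)` for `n ∈ ℕ`. -/
noncomputable def legPZ (n : ℤ) (x : ℝ) : ℂ :=
  if 0 ≤ n then (legP n.toNat x : ℂ) else Complex.I * (legP (-n - 1).toNat x : ℂ)

/-- The complex-valued polynomial `I_n` defined by `(2n+1) I_n(x) = P_{n+1}(x) - P_{n-1}(x)`. -/
noncomputable def legI (n : ℤ) (x : ℝ) : ℂ :=
  (legPZ (n + 1) x - legPZ (n - 1) x) / (2 * (n : ℂ) + 1)

/-- `D_m(x,y) = I_m(x) I_{m-1}(y) - I_{m-1}(x) I_m(y)`, so that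
`D_{n+1}(x,y) = I_{n+1}(x) I_n(y) - I_n(x) I_{n+1}(y)`. -/
noncomputable def legD (m : ℤ) (x y : ℝ) : ℂ :=
  legI m x * legI (m - 1) y - legI (m - 1) x * legI m y


open Polynomial

lemma itadd (k : ℕ) (p q : Polynomial ℝ) :
    derivative^[k] (p + q) = derivative^[k] p + derivative^[k] q := by
  induction k generalizing p q with
  | zero => rfl
  | succ k ih =>
    rw [Function.iterate_succ_apply, Function.iterate_succ_apply, Function.iterate_succ_apply,
      derivative_add, ih]

lemma itsub (k : ℕ) (p q : Polynomial ℝ) :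
    derivative^[k] (p - q) = derivative^[k] p - derivative^[k] q := by
  induction k generalizing p q with
  | zero => rfl
  | succ k ih =>
    rw [Function.iterate_succ_apply, Function.iterate_succ_apply, Function.iterate_succ_apply,
      derivative_sub, ih]

/-- Leibniz for multiplication by X. -/
lemma leib1 : ∀ (k : ℕ) (p : Polynomial ℝ),
    derivative^[k+1] (X * p) = X * derivative^[k+1] p + ((k:Polynomial ℝ)+1) * derivative^[k] p := by
  intro k
  induction k with
  | zero => intro p; simp [derivative_mul]; ring
  | succ k ih =>
    intro p
    have e1 : derivative^[k+1+1] (X * p) = derivative^[k+1] (derivative (X * p)) :=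
      Function.iterate_succ_apply _ _ _
    have e2 : derivative^[k+1] (derivative p) = derivative^[k+1+1] p :=
      (Function.iterate_succ_apply _ _ _).symm
    have e3 : derivative^[k] (derivative p) = derivative^[k+1] p :=
      (Function.iterate_succ_apply _ _ _).symm
    rw [e1, derivative_mul, derivative_X, one_mul, itadd, ih, e2, e3]
    push_cast
    ring

/-- Leibniz for multiplication by X^2 - 1. -/
lemma leib2 (k : ℕ) (p : Polynomial ℝ) :
    derivative^[k+2] ((X^2 - 1) * p)
      = (X^2 - 1) * derivative^[k+2] p
        + 2*((k:Polynomial ℝ)+2) * X * derivative^[k+1] p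
        + ((k:Polynomial ℝ)+2)*((k:Polynomial ℝ)+1) * derivative^[k] p := by
  have h : (X^2 - 1 : Polynomial ℝ) * p = X * (X * p) - p := by ring
  rw [h, itsub, leib1 (k+1) (X * p), leib1 (k+1) p, leib1 k p]
  push_cast
  ring

/-- `R n = (d/dx)^n (x^2-1)^n`, unnormalized Legendre. -/
noncomputable def Rp (n : ℕ) : Polynomial ℝ := derivative^[n] ((X^2 - 1)^n)

lemma Ccast (m : ℕ) : (C (2*((m:ℝ)+1)) : Polynomial ℝ) = 2*((m:Polynomial ℝ)+1) := by
  simp [map_mul, map_add, map_one, map_ofNat, Polynomial.C_eq_natCast]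

lemma du (m : ℕ) : derivative ((X^2 - 1 : Polynomial ℝ)^(m+1))
    = C (2*((m:ℝ)+1)) * (X * (X^2 - 1)^m) := by
  rw [derivative_pow]
  simp [map_mul, map_add, map_one, map_ofNat, Polynomial.C_eq_natCast]
  ring

/-- the `I2` identity. -/
lemma I2p (m : ℕ) : Rp (m+1)
    = 2*(X^2-1) * derivative (Rp m) + 2*((m:Polynomial ℝ)+1) * X * Rp m := by
  match m with
  | 0 => simp [Rp, map_ofNat]; norm_num
  | j+1 =>
    push_cast
    have hA : Rp (j+2) = 2*((j:Polynomial ℝ)+2) *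
        (X * Rp (j+1) + ((j:Polynomial ℝ)+1) * derivative^[j] ((X^2-1)^(j+1))) := by
      show derivative^[j+2] ((X^2-1)^(j+2)) = _
      rw [Function.iterate_succ_apply, du (j+1), iterate_derivative_C_mul,
        leib1 j ((X^2-1)^(j+1)), Ccast]
      show _ = 2*((j:Polynomial ℝ)+2) * (X * derivative^[j+1] ((X^2-1)^(j+1)) + _)
      push_cast
      ring
    have hB : Rp (j+2) = (X^2-1) * derivative (Rp (j+1))
        + 2*((j:Polynomial ℝ)+2) * X * Rp (j+1)
        + ((j:Polynomial ℝ)+2)*((j:Polynomial ℝ)+1) * derivative^[j] ((X^2-1)^(j+1)) := by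
      show derivative^[j+2] ((X^2-1)^(j+2)) = _
      have hu : ((X^2 - 1 : Polynomial ℝ))^(j+2) = (X^2-1) * (X^2-1)^(j+1) := by ring
      rw [hu, leib2 j ((X^2-1)^(j+1))]
      have e : derivative^[j+2] ((X^2-1 : Polynomial ℝ)^(j+1)) = derivative (Rp (j+1)) :=
        Function.iterate_succ_apply' _ _ _
      rw [e]
      rfl
    linear_combination 2*hB - hA

/-- the `I1` identity. -/
lemma I1p (m : ℕ) : derivative (Rp (m+1))
    = 2*((m:Polynomial ℝ)+1) * (X * derivative (Rp m) + ((m:Polynomial ℝ)+1) * Rp m) := by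
  have e0 : derivative (Rp (m+1)) = derivative^[m+1] (derivative ((X^2-1)^(m+1))) := by
    show derivative (derivative^[m+1] ((X^2-1)^(m+1))) = _
    rw [← Function.iterate_succ_apply' derivative (m+1), Function.iterate_succ_apply]
  rw [e0, du m, iterate_derivative_C_mul, leib1 m ((X^2-1)^m), Ccast]
  have e : derivative^[m+1] ((X^2-1 : Polynomial ℝ)^m) = derivative (Rp m) :=
    Function.iterate_succ_apply' _ _ _
  rw [e]
  show _ = 2*((m:Polynomial ℝ)+1) * (X * derivative (Rp m) + ((m:Polynomial ℝ)+1)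
    * derivative^[m] ((X^2-1)^m))
  ring

lemma bonnetP (n : ℕ) : Rp (n+2)
    = 2*(2*(n:Polynomial ℝ)+3)*X*Rp (n+1) - 4*((n:Polynomial ℝ)+1)^2 * Rp n := by
  have h1 := I2p (n+1)
  have h2 := I2p n
  have h3 := I1p n
  push_cast at h1
  linear_combination h1 + 2*(X^2-1)*h3 - 2*((n:Polynomial ℝ)+1)*X*h2


lemma itDeriv (k : ℕ) (p : Polynomial ℝ) :
    iteratedDeriv k (fun y => p.eval y) = fun y => (derivative^[k] p).eval y := by
  induction k with
  | zero => rw [iteratedDeriv_zero]; rfl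
  | succ k ih =>
    rw [iteratedDeriv_succ, ih]
    funext y
    rw [Function.iterate_succ_apply']
    exact Polynomial.deriv (p := derivative^[k] p)

lemma legP_eq (n : ℕ) (x : ℝ) :
    legP n x = (1/(2^n * n.factorial)) * (Rp n).eval x := by
  unfold legP Rp
  congr 1
  have h : (fun y : ℝ => (y^2-1)^n) = fun y => (((X^2-1 : Polynomial ℝ))^n).eval y := by
    funext y; simp
  rw [h, itDeriv]

lemma bonnetR (n : ℕ) (x : ℝ) :
    ((n:ℝ)+2) * legP (n+2) x = (2*(n:ℝ)+3) * x * legP (n+1) x - ((n:ℝ)+1) * legP n x := by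
  have h := congrArg (Polynomial.eval x) (bonnetP n)
  simp only [eval_mul, eval_sub, eval_add, eval_pow, eval_X, eval_one, eval_ofNat,
    eval_natCast] at h
  simp only [legP_eq, Nat.factorial_succ]
  have h2 : (2:ℝ)^n ≠ 0 := pow_ne_zero _ two_ne_zero
  have hf : (n.factorial:ℝ) ≠ 0 := Nat.cast_ne_zero.mpr n.factorial_ne_zero
  have hn1 : ((n:ℝ)+1) ≠ 0 := by positivity
  have hn2 : ((n:ℝ)+2) ≠ 0 := by positivity
  rw [h]
  push_cast
  field_simp
  ring



lemma legP_zero (x : ℝ) : legP 0 x = 1 := by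
  rw [legP_eq]; simp [Rp]

lemma legP_one (x : ℝ) : legP 1 x = x := by
  rw [legP_eq]; simp [Rp]; ring

lemma legPZ_natCast (k : ℕ) (x : ℝ) : legPZ (k : ℤ) x = (legP k x : ℂ) := by
  simp [legPZ]

lemma legPZ_neg (k : ℕ) (x : ℝ) : legPZ (-(k:ℤ)-1) x = Complex.I * (legP k x : ℂ) := by
  unfold legPZ
  rw [if_neg (by omega)]
  have e : (-(-(k:ℤ)-1) - 1).toNat = k := by omega
  rw [e]

lemma bonnetC (m : ℕ) (x : ℝ) :
    ((m:ℂ)+2) * (legP (m+2) x : ℂ)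
      = (2*(m:ℂ)+3) * (x:ℂ) * (legP (m+1) x : ℂ) - ((m:ℂ)+1) * (legP m x : ℂ) := by
  have h := bonnetR m x
  have h2 := congrArg (Complex.ofReal) h
  push_cast at h2
  linear_combination h2

lemma bonnetZ (n : ℤ) (x : ℝ) :
    ((n:ℂ)+1) * legPZ (n+1) x
      = (2*(n:ℂ)+1) * (x:ℂ) * legPZ n x - (n:ℂ) * legPZ (n-1) x := by
  rcases lt_or_ge n 0 with hn | hn
  · rcases lt_or_ge n (-1) with hn2 | hn2
    · -- n ≤ -2
      obtain ⟨m, rfl⟩ : ∃ m : ℕ, n = -(m:ℤ)-2 := ⟨(-n-2).toNat, by omega⟩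
      have eA : (-(m:ℤ)-2+1) = -(m:ℤ)-1 := by ring
      have eB : (-(m:ℤ)-2) = -((m+1:ℕ):ℤ)-1 := by omega
      have eC : (-(m:ℤ)-2-1) = -((m+2:ℕ):ℤ)-1 := by omega
      rw [eC, eA, eB, legPZ_neg m, legPZ_neg (m+1), legPZ_neg (m+2)]
      have h := bonnetC m x
      push_cast at h ⊢
      linear_combination (-Complex.I) * h
    · -- n = -1
      obtain rfl : n = -1 := by omega
      have eB : (-1:ℤ) = -((0:ℕ):ℤ)-1 := by omega
      have eC : ((-1:ℤ)-1) = -((1:ℕ):ℤ)-1 := by omega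
      have eA : ((-1:ℤ)+1) = ((0:ℕ):ℤ) := by omega
      rw [eC, eA, legPZ_natCast, legPZ_neg 1, legP_zero]
      rw [show legPZ (-1) x = legPZ (-((0:ℕ):ℤ)-1) x from by rw [← eB], legPZ_neg 0,
        legP_zero, legP_one]
      push_cast
      ring
  · -- n ≥ 0
    rcases lt_or_ge n 1 with hn2 | hn2
    · -- n = 0
      obtain rfl : n = 0 := by omega
      have eA : ((0:ℤ)+1) = ((1:ℕ):ℤ) := by omega
      rw [eA, legPZ_natCast]
      rw [show legPZ 0 x = legPZ ((0:ℕ):ℤ) x from rfl, legPZ_natCast, legP_zero, legP_one]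
      push_cast
      ring
    · -- n ≥ 1
      obtain ⟨m, rfl⟩ : ∃ m : ℕ, n = (m:ℤ)+1 := ⟨(n-1).toNat, by omega⟩
      have eA : ((m:ℤ)+1+1) = ((m+2:ℕ):ℤ) := by omega
      have eB : ((m:ℤ)+1) = ((m+1:ℕ):ℤ) := by omega
      have eC : ((m:ℤ)+1-1) = ((m:ℕ):ℤ) := by omega
      rw [eC, eA, eB, legPZ_natCast, legPZ_natCast, legPZ_natCast]
      have h := bonnetC m x
      push_cast at h ⊢
      linear_combination h

lemma oddNeZero (n : ℤ) : (2*(n:ℂ)+1) ≠ 0 := by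
  have h0 : ((2*n+1 : ℤ) : ℂ) = 2*(n:ℂ)+1 := by push_cast; ring
  rw [← h0]
  exact Int.cast_ne_zero.mpr (by omega)

lemma legI_mul (n : ℤ) (x : ℝ) :
    (2*(n:ℂ)+1) * legI n x = legPZ (n+1) x - legPZ (n-1) x := by
  unfold legI
  field_simp [oddNeZero n]

lemma Lrec (n : ℤ) (x : ℝ) :
    (2*(n:ℂ)+1)*(x:ℂ)*legI n x = ((n:ℂ)+2)*legI (n+1) x + ((n:ℂ)-1)*legI (n-1) x := by
  have h1 := bonnetZ (n+1) x
  have h2 := bonnetZ (n-1) x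
  have e0 := legI_mul n x
  have e1 := legI_mul (n+1) x
  have e2 := legI_mul (n-1) x
  simp only [add_sub_cancel_right, sub_add_cancel] at e1 e2 h1 h2
  push_cast at h1 h2 e1 e2
  have c1 : (2*(n:ℂ)+3) ≠ 0 := by
    intro h; apply oddNeZero (n+1); push_cast; linear_combination h
  have c2 : (2*(n:ℂ)-1) ≠ 0 := by
    intro h; apply oddNeZero (n-1); push_cast; linear_combination h
  apply mul_left_cancel₀ (mul_ne_zero c1 c2)
  linear_combination (2*(n:ℂ)+3)*(2*(n:ℂ)-1)*(x:ℂ)*e0 - (2*(n:ℂ)-1)*((n:ℂ)+2)*e1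
    - (2*(n:ℂ)+3)*((n:ℂ)-1)*e2 - (2*(n:ℂ)-1)*h1 + (2*(n:ℂ)+3)*h2



theorem statement_16 (x y : ℝ) (hx : x ∈ Set.Icc (-1 : ℝ) 1) (hy : y ∈ Set.Icc (-1 : ℝ) 1)
    (n : ℤ) :
    ((n : ℂ) + 2) * legD (n + 1) x y
      = ((x : ℂ) - (y : ℂ)) * (2 * (n : ℂ) + 1) * legI n x * legI n y
        + ((n : ℂ) - 1) * legD n x y := by
  simp only [legD, add_sub_cancel_right]
  have Lx := Lrec n x
  have Ly := Lrec n y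
  linear_combination legI n x * Ly - legI n y * Lx
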